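/- arXiv:1412.1975 — 3 statements merged into one kernel-verified Lean document; each statement's English description precedes it below -/
import Mathlib

section
/- Let T be the attractor of an IFS {f_1,…,f_q} of injective contractions of a complete metric space, and suppose T is connected. Define the exceptional set E := ⋃ f_α(T) ∩ f_β(T), the union taken over all nonempty finite words α, β over {1,…,q} for which f_α(T) ∩ f_β(T) is a singleton. Then either T has a cut point, or for every irreducible cut set X of T every isolated point of X belongs to E; that is, X admits a partition X = X' ∪ X₀ with X₀ ⊆ E, where X' is the derived set of X. -/
/-!
If `T \ X` is split by disjoint open sets `u`, `v`, irreducibility forces `X = T \ (u ∪ v)`, and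
forces every isolated point `x` of `X` into the closures of both `T ∩ u` and `T ∩ v` (otherwise
`X \ {x}` would still cut `T`). At a level `n` where the pieces `f_w(T)` are smaller than the
isolation radius of `x`, the pieces through `x` cover a neighbourhood of `x` in `T`, so some piece
`f_a(T)` through `x` meets `u` and some `f_b(T)` meets `v`. Without cut points each punctured piece
`f_w(T) \ {x} = f_w(T \ {z})` is connected and misses `X`, so it lies in `u` or in `v`; hence
`f_a(T) ∩ f_b(T) = {x}`.
-/

open Set Filter Topology

/-- A set is the union of two nonempty separated sets. -/
def SepUnion {α : Type*} [TopologicalSpace α] (S : Set α) : Prop :=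
  ∃ U V : Set α, S = U ∪ V ∧ U.Nonempty ∧ V.Nonempty ∧
    closure U ∩ V = ∅ ∧ U ∩ closure V = ∅

/-- `X` is a cut set of `T`: `X ⊆ T` and `T \ X` is disconnected. -/
def IsCutSet {α : Type*} [TopologicalSpace α] (T X : Set α) : Prop :=
  X ⊆ T ∧ SepUnion (T \ X)

/-- `X` is an irreducible cut set of `T`. -/
def IsIrredCutSet {α : Type*} [TopologicalSpace α] (T X : Set α) : Prop :=
  IsCutSet T X ∧ ∀ X₀ : Set α, X₀ ⊂ X → closure X₀ ∩ T ⊆ X₀ → ¬ SepUnion (T \ X₀)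

/-- `f_α` for a word `α` (a list of indices): composition of the maps. -/
def wordMap {α : Type*} {q : ℕ} (f : Fin q → α → α) : List (Fin q) → α → α :=
  fun l => l.foldr (fun i g => f i ∘ g) id

open Metric Function

section Separation

variable {α : Type*} [TopologicalSpace α] {S u v : Set α}

lemma sepUnion_of_isOpen (hu : IsOpen u) (hv : IsOpen v) (hS : S ⊆ u ∪ v)
    (huv : S ∩ (u ∩ v) = ∅) (hSu : (S ∩ u).Nonempty) (hSv : (S ∩ v).Nonempty) :
    SepUnion S := by
  refine ⟨S ∩ u, S ∩ v, ?_, hSu, hSv, ?_, ?_⟩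
  · rw [← inter_union_distrib_left, inter_eq_left.2 hS]
  · refine eq_empty_of_forall_notMem fun y ⟨hy, hyS, hyv⟩ => ?_
    obtain ⟨z, hzv, hzS, hzu⟩ := mem_closure_iff.1 hy v hv hyv
    exact huv.subset ⟨hzS, hzu, hzv⟩
  · refine eq_empty_of_forall_notMem fun y ⟨⟨hyS, hyu⟩, hy⟩ => ?_
    obtain ⟨z, hzu, hzS, hzv⟩ := mem_closure_iff.1 hy u hu hyu
    exact huv.subset ⟨hzS, hzu, hzv⟩

lemma isPreconnected_of_not_sepUnion (h : ¬ SepUnion S) : IsPreconnected S := by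
  by_contra hS
  simp only [IsPreconnected, not_forall, not_nonempty_iff_eq_empty] at hS
  obtain ⟨u, v, hu, hv, hsub, hSu, hSv, huv⟩ := hS
  exact h (sepUnion_of_isOpen hu hv hsub huv hSu hSv)

lemma SepUnion.exists_isOpen_disjoint [CompletelyNormalSpace α] (h : SepUnion S) :
    ∃ u v, IsOpen u ∧ IsOpen v ∧ Disjoint u v ∧ S ⊆ u ∪ v ∧
      (S ∩ u).Nonempty ∧ (S ∩ v).Nonempty := by
  obtain ⟨U, V, rfl, hU, hV, hUV, hVU⟩ := h
  obtain ⟨u, v, hu, hv, hUu, hVv, huv⟩ := separatedNhds_iff_disjoint.2 <|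
    completely_normal (disjoint_iff_inter_eq_empty.2 hUV) (disjoint_iff_inter_eq_empty.2 hVU)
  exact ⟨u, v, hu, hv, huv, union_subset_union hUu hVv,
    hU.mono (subset_inter subset_union_left hUu), hV.mono (subset_inter subset_union_right hVv)⟩

lemma inter_eq_singleton_of_isPreconnected_diff {A B : Set α} {x : α}
    (hu : IsOpen u) (hv : IsOpen v) (huv : Disjoint u v) (hxA : x ∈ A) (hxB : x ∈ B)
    (hA : IsPreconnected (A \ {x})) (hB : IsPreconnected (B \ {x}))
    (hAuv : A \ {x} ⊆ u ∪ v) (hBuv : B \ {x} ⊆ u ∪ v)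
    (hAu : (A \ {x} ∩ u).Nonempty) (hBv : (B \ {x} ∩ v).Nonempty) :
    A ∩ B = {x} := by
  have hAu' := hA.subset_left_of_subset_union hu hv huv hAuv hAu
  have hBv' := hB.subset_right_of_subset_union hu hv huv hBuv hBv
  refine subset_antisymm (fun y ⟨hyA, hyB⟩ => by_contra fun hyx => ?_) (by simp [hxA, hxB])
  exact disjoint_left.1 huv (hAu' ⟨hyA, hyx⟩) (hBv' ⟨hyB, hyx⟩)

end Separation

section IrredCutSet

variable {α : Type*} [TopologicalSpace α] {T X u v : Set α}

lemma IsIrredCutSet.eq_diff_union (hX : IsIrredCutSet T X) (hT : IsClosed T) (hu : IsOpen u)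
    (hv : IsOpen v) (huv : Disjoint u v) (hsub : T \ X ⊆ u ∪ v)
    (hXu : (T \ X ∩ u).Nonempty) (hXv : (T \ X ∩ v).Nonempty) :
    X = T \ (u ∪ v) := by
  have hY : T \ (u ∪ v) ⊆ X := fun y ⟨hyT, hy⟩ =>
    by_contra fun hyX => hy (hsub ⟨hyT, hyX⟩)
  refine (hY.eq_or_ssubset.resolve_right fun hlt => hX.2 _ hlt ?_ ?_).symm
  · rw [(hT.sdiff (hu.union hv)).closure_eq]
    exact inter_subset_left
  · have hTX : T \ X ⊆ T \ (T \ (u ∪ v)) := sdiff_subset_sdiff_right hY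
    refine sepUnion_of_isOpen hu hv (fun y hy => by_contra fun h => hy.2 ⟨hy.1, h⟩) ?_
      (hXu.mono (inter_subset_inter_left _ hTX)) (hXv.mono (inter_subset_inter_left _ hTX))
    exact eq_empty_of_forall_notMem fun y ⟨_, hyu, hyv⟩ => disjoint_left.1 huv hyu hyv

lemma IsIrredCutSet.mem_closure_of_not_accPt (hX : IsIrredCutSet T X) (hT : IsClosed T)
    (hu : IsOpen u) (hv : IsOpen v) (huv : Disjoint u v) (hXuv : X = T \ (u ∪ v))
    (hTu : (T ∩ u).Nonempty) {x : α} (hx : x ∈ X) (hacc : ¬ AccPt x (𝓟 X)) :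
    x ∈ closure (T ∩ u) := by
  have hXcl : IsClosed X := hXuv ▸ hT.sdiff (hu.union hv)
  have hxX : x ∉ closure (X \ {x}) := by
    rwa [mem_closure_iff_clusterPt, ← accPt_principal_iff_clusterPt]
  have hxT : x ∈ T := (hXuv ▸ hx).1
  have hxuv : x ∉ u ∪ v := (hXuv ▸ hx).2
  by_contra hxu
  refine hX.2 (X \ {x}) (sdiff_singleton_ssubset.2 hx) ?_ ?_
  · rintro y ⟨hy, -⟩
    exact ⟨closure_minimal sdiff_subset hXcl hy,
      fun hyx => hxX (mem_singleton_iff.1 hyx ▸ hy)⟩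
  have hTX : T \ (X \ {x}) = insert x (T ∩ (u ∪ v)) := by
    rw [hXuv, sdiff_sdiff_right, sdiff_sdiff_right_self,
      inter_eq_right.2 (singleton_subset_iff.2 hxT), union_singleton]
  rw [hTX]
  refine sepUnion_of_isOpen hu (hv.union isClosed_closure.isOpen_compl) ?_ ?_
    (hTu.mono fun y hy => ⟨Or.inr ⟨hy.1, Or.inl hy.2⟩, hy.2⟩)
    ⟨x, mem_insert x _, Or.inr hxu⟩
  · rintro y (rfl | ⟨-, hy | hy⟩)
    exacts [Or.inr (Or.inr hxu), Or.inl hy, Or.inr (Or.inl hy)]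
  · refine eq_empty_of_forall_notMem ?_
    rintro y ⟨hy, hyu, hyv⟩
    obtain rfl | ⟨hyT, -⟩ := hy
    · exact hxuv (Or.inl hyu)
    · exact hyv.elim (disjoint_left.1 huv hyu) fun hycl => hycl (subset_closure ⟨hyT, hyu⟩)

end IrredCutSet

lemma exists_lipschitzWith_lt_one_of_contractingWith {α ι : Type*} [EMetricSpace α]
    [Fintype ι] {f : ι → α → α} (hf : ∀ i, ∃ K, ContractingWith K (f i)) :
    ∃ K < 1, ∀ i, LipschitzWith K (f i) := by
  choose K hK using hf
  exact ⟨Finset.univ.sup K, (Finset.sup_lt_iff zero_lt_one).2 fun i _ => (hK i).1,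
    fun i => (hK i).2.weaken (Finset.le_sup (Finset.mem_univ i))⟩

section WordMap

variable {α : Type*} {q : ℕ} {f : Fin q → α → α} {T : Set α}

lemma wordMap_cons (i : Fin q) (w : List (Fin q)) : wordMap f (i :: w) = f i ∘ wordMap f w :=
  rfl

lemma wordMap_injective (hf : ∀ i, Injective (f i)) (w : List (Fin q)) :
    Injective (wordMap f w) := by
  induction w with
  | nil => exact injective_id
  | cons i w ih => exact (hf i).comp ih

lemma continuous_wordMap [TopologicalSpace α] (hf : ∀ i, Continuous (f i)) (w : List (Fin q)) :
    Continuous (wordMap f w) := by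
  induction w with
  | nil => exact continuous_id
  | cons i w ih => exact (hf i).comp ih

lemma lipschitzWith_wordMap [PseudoEMetricSpace α] {K : NNReal}
    (hf : ∀ i, LipschitzWith K (f i)) (w : List (Fin q)) :
    LipschitzWith (K ^ w.length) (wordMap f w) := by
  induction w with
  | nil => exact LipschitzWith.id
  | cons i w ih =>
    rw [List.length_cons, pow_succ']
    exact (hf i).comp ih

lemma wordMap_image_subset (hT : ⋃ i, f i '' T ⊆ T) (w : List (Fin q)) :
    wordMap f w '' T ⊆ T := by
  induction w with
  | nil => simp [wordMap]
  | cons i w ih =>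
    rw [wordMap_cons, image_comp]
    exact (image_mono ih).trans ((subset_iUnion (fun i => f i '' T) i).trans hT)

lemma exists_length_eq_mem_wordMap_image (hT : T ⊆ ⋃ i, f i '' T) (n : ℕ) {y : α}
    (hy : y ∈ T) : ∃ w : List (Fin q), w.length = n ∧ y ∈ wordMap f w '' T := by
  induction n generalizing y with
  | zero => exact ⟨[], rfl, y, hy, rfl⟩
  | succ n ih =>
    obtain ⟨i, z, hz, rfl⟩ := mem_iUnion.1 (hT hy)
    obtain ⟨w, rfl, hzw⟩ := ih hz
    exact ⟨i :: w, rfl, by rw [wordMap_cons, image_comp]; exact mem_image_of_mem _ hzw⟩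

lemma exists_wordMap_image_mem_of_mem_closure [TopologicalSpace α] [T2Space α]
    (hf : ∀ i, Continuous (f i)) (hT : IsCompact T) (hcov : T ⊆ ⋃ i, f i '' T) (n : ℕ)
    {s : Set α} (hs : s ⊆ T) {x : α} (hx : x ∈ closure s) :
    ∃ w : List (Fin q),
      w.length = n ∧ x ∈ wordMap f w '' T ∧ (wordMap f w '' T ∩ s).Nonempty := by
  set C := ⋃ w ∈ {w : List (Fin q) | w.length = n ∧ x ∉ wordMap f w '' T}, wordMap f w '' T
  have hC : IsClosed C :=
    ((List.finite_length_eq _ n).subset fun _ hw => hw.1).isClosed_biUnion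
      fun w _ => (hT.image (continuous_wordMap hf w)).isClosed
  have hxC : x ∉ C := by simp [C]
  obtain ⟨y, hyC, hys⟩ := mem_closure_iff.1 hx Cᶜ hC.isOpen_compl hxC
  obtain ⟨w, hw, hyw⟩ := exists_length_eq_mem_wordMap_image hcov n (hs hys)
  by_cases hxw : x ∈ wordMap f w '' T
  · exact ⟨w, hw, hxw, y, hyw, hys⟩
  · exact (hyC (mem_biUnion ⟨hw, hxw⟩ hyw)).elim

lemma isPreconnected_wordMap_image_diff_singleton [TopologicalSpace α]
    (hinj : ∀ i, Injective (f i)) (hf : ∀ i, Continuous (f i))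
    (hT : ∀ z ∈ T, IsPreconnected (T \ {z})) {w : List (Fin q)} {x : α}
    (hx : x ∈ wordMap f w '' T) : IsPreconnected (wordMap f w '' T \ {x}) := by
  obtain ⟨z, hz, rfl⟩ := hx
  rw [← image_singleton, ← image_sdiff (wordMap_injective hinj w)]
  exact (hT z hz).image _ (continuous_wordMap hf w).continuousOn

lemma wordMap_image_subset_ball [PseudoMetricSpace α] {K : NNReal}
    (hf : ∀ i, LipschitzWith K (f i)) (hT : Bornology.IsBounded T) {w : List (Fin q)}
    {x : α} {ε : ℝ} (hx : x ∈ wordMap f w '' T) (hε : (K : ℝ) ^ w.length * diam T < ε) :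
    wordMap f w '' T ⊆ ball x ε := fun y hy =>
  calc dist y x ≤ diam (wordMap f w '' T) :=
        dist_le_diam_of_mem ((lipschitzWith_wordMap hf w).isBounded_image hT) hy hx
    _ ≤ (K : ℝ) ^ w.length * diam T := by
        simpa using (lipschitzWith_wordMap hf w).diam_image_le T hT
    _ < ε := hε

end WordMap

theorem exists_wordMap_image_inter_eq_singleton {α : Type*} [MetricSpace α] {q : ℕ}
    {f : Fin q → α → α} (hinj : ∀ i, Injective (f i)) {K : NNReal} (hK : K < 1)
    (hf : ∀ i, LipschitzWith K (f i)) {T : Set α} (hT : IsCompact T)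
    (hattr : T = ⋃ i, f i '' T) (hpre : ∀ z ∈ T, IsPreconnected (T \ {z}))
    {u v : Set α} (hu : IsOpen u) (hv : IsOpen v) (huv : Disjoint u v) {x : α} {N : Set α}
    (hN : N ∈ 𝓝 x) (hNT : N ∩ T ⊆ insert x (u ∪ v)) (hx : x ∉ u ∪ v)
    (hxu : x ∈ closure (T ∩ u)) (hxv : x ∈ closure (T ∩ v)) :
    ∃ a b : List (Fin q), a ≠ [] ∧ b ≠ [] ∧
      wordMap f a '' T ∩ wordMap f b '' T = {x} := by
  have hcont i : Continuous (f i) := (hf i).continuous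
  obtain ⟨ε, hε, hball⟩ := Metric.mem_nhds_iff.1 hN
  have hsmall : Tendsto (fun n : ℕ => (K : ℝ) ^ n * diam T) atTop (𝓝 0) := by
    simpa using (tendsto_pow_atTop_nhds_zero_of_lt_one K.coe_nonneg hK).mul_const (diam T)
  obtain ⟨n, hn, hn1⟩ := ((hsmall.eventually_lt_const hε).and (eventually_ge_atTop 1)).exists
  -- Pieces of level `n` through `x` lie in `N`, which meets `T \ (u ∪ v)` only in `x`.
  have hpiece : ∀ w : List (Fin q), w.length = n → x ∈ wordMap f w '' T →
      IsPreconnected (wordMap f w '' T \ {x}) ∧ wordMap f w '' T \ {x} ⊆ u ∪ v :=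
    fun w hw hxw => ⟨isPreconnected_wordMap_image_diff_singleton hinj hcont hpre hxw,
      fun y ⟨hy, hyx⟩ =>
        (hNT ⟨hball (wordMap_image_subset_ball hf hT.isBounded hxw (hw ▸ hn) hy),
          wordMap_image_subset hattr.ge w hy⟩).resolve_left hyx⟩
  obtain ⟨a, ha, hxa, ya, hya, -, hyau⟩ :=
    exists_wordMap_image_mem_of_mem_closure hcont hT hattr.le n inter_subset_left hxu
  obtain ⟨b, hb, hxb, yb, hyb, -, hybv⟩ :=
    exists_wordMap_image_mem_of_mem_closure hcont hT hattr.le n inter_subset_left hxv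
  refine ⟨a, b, List.ne_nil_of_length_pos (by omega), List.ne_nil_of_length_pos (by omega),
    inter_eq_singleton_of_isPreconnected_diff hu hv huv hxa hxb (hpiece a ha hxa).1
      (hpiece b hb hxb).1 (hpiece a ha hxa).2 (hpiece b hb hxb).2
      ⟨ya, ⟨hya, ?_⟩, hyau⟩ ⟨yb, ⟨hyb, ?_⟩, hybv⟩⟩
  · rintro rfl; exact hx (Or.inl hyau)
  · rintro rfl; exact hx (Or.inr hybv)

theorem statement0_general {α : Type*} [MetricSpace α] {q : ℕ}
    (f : Fin q → α → α)
    (hinj : ∀ i, Function.Injective (f i))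
    (hcon : ∀ i, ∃ K, ContractingWith K (f i))
    (T : Set α) (hcpt : IsCompact T)
    (hattr : T = ⋃ i, f i '' T) :
    (∃ z ∈ T, SepUnion (T \ {z})) ∨
      ∀ X : Set α, IsIrredCutSet T X →
        ∃ X₀ : Set α,
          X₀ ⊆ {x | ∃ a b : List (Fin q), a ≠ [] ∧ b ≠ [] ∧
              wordMap f a '' T ∩ wordMap f b '' T = {x}} ∧
          X = {x ∈ X | AccPt x (𝓟 X)} ∪ X₀ := by
  refine or_iff_not_imp_left.2 fun hcut X hX => ?_
  have hpre : ∀ z ∈ T, IsPreconnected (T \ {z}) := fun z hz =>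
    isPreconnected_of_not_sepUnion fun h => hcut ⟨z, hz, h⟩
  obtain ⟨K, hK, hf⟩ := exists_lipschitzWith_lt_one_of_contractingWith hcon
  obtain ⟨u, v, hu, hv, huv, hsub, hXu, hXv⟩ := hX.1.2.exists_isOpen_disjoint
  have hXuv := hX.eq_diff_union hcpt.isClosed hu hv huv hsub hXu hXv
  have hTu : (T ∩ u).Nonempty := hXu.mono (inter_subset_inter_left _ sdiff_subset)
  have hTv : (T ∩ v).Nonempty := hXv.mono (inter_subset_inter_left _ sdiff_subset)
  refine ⟨{x ∈ X | ¬ AccPt x (𝓟 X)}, fun x ⟨hx, hacc⟩ => ?_, ?_⟩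
  · obtain ⟨N, hN, hNX⟩ : ∃ N ∈ 𝓝 x, ∀ y ∈ N ∩ X, y = x := by
      simpa [accPt_iff_nhds] using hacc
    refine exists_wordMap_image_inter_eq_singleton hinj hK hf hcpt hattr hpre hu hv huv hN
      (fun y ⟨hyN, hyT⟩ => ?_) (hXuv ▸ hx).2
      (hX.mem_closure_of_not_accPt hcpt.isClosed hu hv huv hXuv hTu hx hacc)
      (hX.mem_closure_of_not_accPt hcpt.isClosed hv hu huv.symm (union_comm u v ▸ hXuv) hTv hx
        hacc)
    by_cases hy : y ∈ u ∪ v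
    · exact Or.inr hy
    · exact Or.inl (hNX y ⟨hyN, hXuv ▸ ⟨hyT, hy⟩⟩)
  · ext y
    by_cases hy : AccPt y (𝓟 X) <;> simp [hy]

theorem statement0 {α : Type*} [MetricSpace α] [CompleteSpace α] {q : ℕ}
    (f : Fin q → α → α)
    (hinj : ∀ i, Function.Injective (f i))
    (hcon : ∀ i, ∃ K, ContractingWith K (f i))
    (T : Set α) (hne : T.Nonempty) (hcpt : IsCompact T)
    (hattr : T = ⋃ i, f i '' T) (hconn : IsConnected T) :
    (∃ z ∈ T, SepUnion (T \ {z})) ∨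
      ∀ X : Set α, IsIrredCutSet T X →
        ∃ X₀ : Set α,
          X₀ ⊆ {x | ∃ a b : List (Fin q), a ≠ [] ∧ b ≠ [] ∧
              wordMap f a '' T ∩ wordMap f b '' T = {x}} ∧
          X = {x ∈ X | AccPt x (𝓟 X)} ∪ X₀ :=
  statement0_general f hinj hcon T hcpt hattr
end

section
/- Let T be a connected ℤ^d-tile T(A,D) such that T ∩ (T+s) is not a singleton for every s ∈ ℤ^d. Then either T has a cut point, or every irreducible cut set of T is a perfect set (closed with no isolated points). -/
/-!
Suppose `T` has no cut point and `x` is an isolated point of an irreducible cut set `X`, with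
`T \ X = U ∪ V` separated. Irreducibility forces `X ⊆ closure U ∩ closure V` (in particular `X`
is closed), so near `x` the tile `T` lies in `U ∪ V ∪ {x}` and both sides accumulate at `x`.
Subdivide `T` into the pieces `A⁻ⁿ(T + v)`, `v ∈ Vₙ`, of diameter so small that the pieces
through `x` stay in this neighbourhood. Each piece is homeomorphic to `T`, so it has no cut point
and a piece through `x` lies on one side of the separation. Near `x` the pieces through `x` cover
`T`, so one of them lies in `U ∪ {x}` and another in `V ∪ {x}`: they meet exactly in `x`, and
rescaling by `Aⁿ` yields a lattice vector `s` with `T ∩ (T + s)` a singleton.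
-/

open Set Filter Topology Matrix

noncomputable section

/-- The real matrix obtained from an integer matrix. -/
def rmat {d : ℕ} (A : Matrix (Fin d) (Fin d) ℤ) : Matrix (Fin d) (Fin d) ℝ :=
  A.map Int.cast

/-- The real vector obtained from an integer vector. -/
def rvec {d : ℕ} (v : Fin d → ℤ) : Fin d → ℝ := fun i => (v i : ℝ)

/-- The translate `T + v` of `T` by a lattice vector `v`. -/
def trT {d : ℕ} (T : Set (Fin d → ℝ)) (v : Fin d → ℤ) : Set (Fin d → ℝ) :=
  (fun x => x + rvec v) '' T

/-- Every complex eigenvalue of `A` has modulus `> 1`. -/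
def Expanding {d : ℕ} (A : Matrix (Fin d) (Fin d) ℤ) : Prop :=
  ∀ μ : ℂ, Module.End.HasEigenvalue (Matrix.toLin' (A.map (Int.cast : ℤ → ℂ))) μ →
    1 < ‖μ‖

/-- `D` is a complete set of coset representatives of `ℤ^d / A ℤ^d`. -/
def ResidueSystem {d : ℕ} (A : Matrix (Fin d) (Fin d) ℤ) (D : Set (Fin d → ℤ)) : Prop :=
  ∀ x : Fin d → ℤ, ∃! e, e ∈ D ∧ ∃ y : Fin d → ℤ, x = A.mulVec y + e

/-- `T` is the attractor `T(A,D)`: nonempty, compact, with `A·T = T + D`. -/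
def SelfAffine {d : ℕ} (A : Matrix (Fin d) (Fin d) ℤ) (D : Set (Fin d → ℤ))
    (T : Set (Fin d → ℝ)) : Prop :=
  T.Nonempty ∧ IsCompact T ∧
    (rmat A).mulVec '' T = ⋃ e ∈ D, (fun x => x + rvec e) '' T

/-- `T = T(A,D)` is a `ℤ^d`-tile: a self-affine attractor for an expanding integer
matrix and a standard digit set, with nonempty interior, tiling `ℝ^d` by `ℤ^d`. -/
def IsZdTile {d : ℕ} (A : Matrix (Fin d) (Fin d) ℤ) (D : Set (Fin d → ℤ))
    (T : Set (Fin d → ℝ)) : Prop :=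
  Expanding A ∧ ResidueSystem A D ∧ SelfAffine A D T ∧ (interior T).Nonempty ∧
    (⋃ v : Fin d → ℤ, trT T v) = univ ∧
    Pairwise fun v₁ v₂ : Fin d → ℤ => interior (trT T v₁) ∩ trT T v₂ = ∅

/-- `V_n = D + A·D + ⋯ + A^{n-1}·D`, the vertex set of the `n`-th Hata graph. -/
def Vset {d : ℕ} (A : Matrix (Fin d) (Fin d) ℤ) (D : Set (Fin d → ℤ)) (n : ℕ) :
    Set (Fin d → ℤ) :=
  {v | ∃ dig : Fin n → (Fin d → ℤ), (∀ k, dig k ∈ D) ∧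
    v = ∑ k : Fin n, (A ^ (k : ℕ)).mulVec (dig k)}

/-- The set of children `C(U) = A·U + D`. -/
def childSet {d : ℕ} (A : Matrix (Fin d) (Fin d) ℤ) (D : Set (Fin d → ℤ))
    (U : Set (Fin d → ℤ)) : Set (Fin d → ℤ) :=
  {w | ∃ u ∈ U, ∃ e ∈ D, w = A.mulVec u + e}

/-- `X_n(W) = ⋃_{v ∈ W} A^{-n}(T + v)`. -/
def XnSet {d : ℕ} (A : Matrix (Fin d) (Fin d) ℤ) (T : Set (Fin d → ℝ)) (n : ℕ)
    (W : Set (Fin d → ℤ)) : Set (Fin d → ℝ) :=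
  ⋃ v ∈ W, ((rmat A)⁻¹ ^ n).mulVec '' trT T v

/-- The subgraph of the `n`-th Hata graph induced on `W` is connected:
any two vertices of `W` are joined by a path inside `W`, consecutive tiles meeting. -/
def HataConn {d : ℕ} (T : Set (Fin d → ℝ)) (W : Set (Fin d → ℤ)) : Prop :=
  ∀ v ∈ W, ∀ w ∈ W,
    Relation.ReflTransGen (fun a b => a ∈ W ∧ b ∈ W ∧ (trT T a ∩ trT T b).Nonempty) v w

section CutSets

variable {α β : Type*} [TopologicalSpace α] [TopologicalSpace β]

def HasCutPoint (S : Set α) : Prop :=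
  ∃ z ∈ S, SepUnion (S \ {z})

lemma sepUnion_of_isClosed {S P Q F G : Set α} (hS : S = P ∪ Q) (hP : P.Nonempty)
    (hQ : Q.Nonempty) (hPF : P ⊆ F) (hQG : Q ⊆ G) (hF : IsClosed F) (hG : IsClosed G)
    (hFQ : Disjoint F Q) (hPG : Disjoint P G) : SepUnion S :=
  ⟨P, Q, hS, hP, hQ,
    disjoint_iff_inter_eq_empty.1 (hFQ.mono_left (closure_minimal hPF hF)),
    disjoint_iff_inter_eq_empty.1 (hPG.mono_right (closure_minimal hQG hG))⟩

lemma subset_left_of_not_sepUnion {S U V : Set α} (hS : ¬ SepUnion S) (hSUV : S ⊆ U ∪ V)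
    (hsep : closure U ∩ V = ∅) (hsep' : U ∩ closure V = ∅) (hSU : (S ∩ U).Nonempty) :
    S ⊆ U := by
  by_contra hSU'
  obtain ⟨y, hyS, hyU⟩ := not_subset.1 hSU'
  refine hS (sepUnion_of_isClosed (P := S ∩ U) (Q := S ∩ V) ?_ hSU
    ⟨y, hyS, (hSUV hyS).resolve_left hyU⟩ (inter_subset_right.trans subset_closure)
    (inter_subset_right.trans subset_closure) isClosed_closure isClosed_closure
    ((disjoint_iff_inter_eq_empty.2 hsep).mono_right inter_subset_right)
    ((disjoint_iff_inter_eq_empty.2 hsep').mono_left inter_subset_right))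
  rw [← inter_union_distrib_left, inter_eq_left.2 hSUV]

lemma SepUnion.image (g : α ≃ₜ β) {S : Set α} (h : SepUnion S) : SepUnion (g '' S) := by
  obtain ⟨U, V, hS, hU, hV, hsep, hsep'⟩ := h
  refine ⟨g '' U, g '' V, by rw [hS, image_union], hU.image g, hV.image g, ?_, ?_⟩
  · rw [← g.image_closure, ← image_inter g.injective, hsep, image_empty]
  · rw [← g.image_closure, ← image_inter g.injective, hsep', image_empty]

lemma HasCutPoint.image (g : α ≃ₜ β) {S : Set α} (h : HasCutPoint S) : HasCutPoint (g '' S) := by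
  obtain ⟨z, hz, hsep⟩ := h
  refine ⟨g z, mem_image_of_mem g hz, ?_⟩
  rw [← image_singleton, ← image_sdiff g.injective]
  exact hsep.image g

lemma Homeomorph.hasCutPoint_image_iff (g : α ≃ₜ β) {S : Set α} :
    HasCutPoint (g '' S) ↔ HasCutPoint S :=
  ⟨fun h => g.symm_image_image S ▸ h.image g.symm, HasCutPoint.image g⟩

lemma IsIrredCutSet.subset_closure_inter_closure_of_subset_union {T X U V : Set α}
    (h : IsIrredCutSet T X) (hUV : T \ X = U ∪ V) (hU : U.Nonempty) (hV : V.Nonempty)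
    (hsep : closure U ∩ V = ∅) (hsep' : U ∩ closure V = ∅) (hX : X ⊆ closure U ∪ closure V) :
    X ⊆ closure U ∩ closure V := by
  -- `C` is a cut set of `T`, closed in `T` and contained in `X`, so it cannot be smaller than `X`
  set C := closure U ∩ closure V ∩ T
  have hUC : ∀ u ∈ U, u ∉ C := fun u hu hu' =>
    (eq_empty_iff_forall_notMem.1 hsep') u ⟨hu, hu'.1.2⟩
  have hVC : ∀ v ∈ V, v ∉ C := fun v hv hv' =>
    (eq_empty_iff_forall_notMem.1 hsep) v ⟨hv'.1.1, hv⟩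
  have hCX : C ⊆ X := fun y hy => by
    by_contra hyX
    rcases (hUV ▸ ⟨hy.2, hyX⟩ : y ∈ U ∪ V) with hyU | hyV
    exacts [hUC y hyU hy, hVC y hyV hy]
  have hT : T ⊆ closure U ∪ closure V := fun y hy => by
    by_cases hyX : y ∈ X
    · exact hX hyX
    · exact union_subset_union subset_closure subset_closure (hUV ▸ ⟨hy, hyX⟩)
  have hUT : U ⊆ T := fun u hu => (hUV.symm ▸ Or.inl hu : u ∈ T \ X).1
  have hVT : V ⊆ T := fun v hv => (hUV.symm ▸ Or.inr hv : v ∈ T \ X).1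
  by_contra hXC
  refine h.2 C ⟨hCX, fun hXC' => hXC fun y hy => (hXC' hy).1⟩
    (fun y hy => ⟨(isClosed_closure.inter isClosed_closure).closure_subset_iff.2
      inter_subset_left hy.1, hy.2⟩)
    (sepUnion_of_isClosed (P := (closure U ∩ T) \ C) (Q := (closure V ∩ T) \ C)
      ?_ ?_ ?_ (fun y hy => hy.1.1) (fun y hy => hy.1.1) isClosed_closure isClosed_closure ?_ ?_)
  · rw [← union_sdiff_distrib, ← union_inter_distrib_right, inter_eq_right.2 hT]
  · obtain ⟨u, hu⟩ := hU
    exact ⟨u, ⟨subset_closure hu, hUT hu⟩, hUC u hu⟩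
  · obtain ⟨v, hv⟩ := hV
    exact ⟨v, ⟨subset_closure hv, hVT hv⟩, hVC v hv⟩
  · exact disjoint_left.2 fun y hyU hy => hy.2 ⟨⟨hyU, hy.1.1⟩, hy.1.2⟩
  · exact disjoint_left.2 fun y hy hyV => hy.2 ⟨⟨hy.1.1, hyV⟩, hy.1.2⟩

section LocallyFinite

variable {ι : Type*} {K : ι → Set α} {U V : Set α} {x : α}

lemma exists_mem_subset_of_locallyFinite (hK : LocallyFinite K) (hKc : ∀ i, IsClosed (K i))
    (hcut : ∀ i, ¬ HasCutPoint (K i)) (hsub : ∀ i, x ∈ K i → K i ⊆ {x} ∪ (U ∪ V))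
    (hcov : U ⊆ ⋃ i, K i) (hsep : closure U ∩ V = ∅) (hsep' : U ∩ closure V = ∅)
    (hxU : x ∈ closure U) (hxV : x ∈ closure V) : ∃ i, x ∈ K i ∧ K i ⊆ {x} ∪ U := by
  obtain ⟨u, huK, hu⟩ :=
    ((hK.eventually_subset hKc x).and_frequently (mem_closure_iff_frequently.1 hxU)).exists
  obtain ⟨i, hi⟩ := mem_iUnion.1 (hcov hu)
  have hxi : x ∈ K i := huK hi
  have hux : u ≠ x := fun h => eq_empty_iff_forall_notMem.1 hsep' x ⟨h ▸ hu, hxV⟩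
  exact ⟨i, hxi, sdiff_subset_iff.1 <| subset_left_of_not_sepUnion
    (fun h => hcut i ⟨x, hxi, h⟩) (sdiff_subset_iff.2 (hsub i hxi)) hsep hsep'
    ⟨u, ⟨hi, hux⟩, hu⟩⟩

lemma exists_inter_eq_singleton_of_locallyFinite (hK : LocallyFinite K)
    (hKc : ∀ i, IsClosed (K i)) (hcut : ∀ i, ¬ HasCutPoint (K i))
    (hsub : ∀ i, x ∈ K i → K i ⊆ {x} ∪ (U ∪ V)) (hcov : U ∪ V ⊆ ⋃ i, K i)
    (hsep : closure U ∩ V = ∅) (hsep' : U ∩ closure V = ∅) (hxU : x ∈ closure U)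
    (hxV : x ∈ closure V) : ∃ i j, K i ∩ K j = {x} := by
  obtain ⟨i, hxi, hi⟩ := exists_mem_subset_of_locallyFinite hK hKc hcut hsub
    (subset_union_left.trans hcov) hsep hsep' hxU hxV
  obtain ⟨j, hxj, hj⟩ := exists_mem_subset_of_locallyFinite (U := V) (V := U) hK hKc hcut
    (by simpa only [union_comm V] using hsub) (subset_union_right.trans hcov)
    (by rwa [inter_comm]) (by rwa [inter_comm]) hxV hxU
  refine ⟨i, j, subset_antisymm (fun y hy => ?_) (singleton_subset_iff.2 ⟨hxi, hxj⟩)⟩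
  rcases hi hy.1 with hyx | hyU
  · exact hyx
  rcases hj hy.2 with hyx | hyV
  · exact hyx
  exact absurd ⟨subset_closure hyU, hyV⟩ (eq_empty_iff_forall_notMem.1 hsep y)

end LocallyFinite

end CutSets

section MetricCutSets

variable {α : Type*} [PseudoMetricSpace α] {T X U V : Set α}

lemma IsIrredCutSet.subset_closure_diff (h : IsIrredCutSet T X) : X ⊆ closure (T \ X) := by
  intro w hw
  by_contra hw'
  -- a small sphere around `w` meets `T` in a smaller cut set, separating `w` from `T \ X`
  obtain ⟨r, hr, hball⟩ := Metric.nhds_basis_closedBall.mem_iff.1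
    (isClosed_closure.isOpen_compl.mem_nhds hw')
  have hball_X : Metric.closedBall w r ∩ T ⊆ X := fun y hy => by
    by_contra hyX
    exact hball hy.1 (subset_closure ⟨hy.2, hyX⟩)
  obtain ⟨⟨hXT, U, V, hUV, ⟨u, hu⟩, -⟩, hirr⟩ := h
  have hu' : u ∈ T \ X := hUV ▸ Or.inl hu
  refine hirr (Metric.sphere w r ∩ T)
    ⟨(inter_subset_inter_left _ Metric.sphere_subset_closedBall).trans hball_X,
      fun hX => hr.ne (by simpa using (hX hw).1)⟩
    (fun y hy => ⟨Metric.isClosed_sphere.closure_subset_iff.2 inter_subset_left hy.1, hy.2⟩)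
    (sepUnion_of_isClosed (P := Metric.ball w r ∩ T) (Q := T \ Metric.closedBall w r) ?_
      ⟨w, Metric.mem_ball_self hr, hXT hw⟩ ⟨u, hu'.1, fun hu'' => hball hu'' (subset_closure hu')⟩
      (inter_subset_left.trans Metric.ball_subset_closedBall)
      (fun y hy hy' => hy.2 (Metric.ball_subset_closedBall hy'))
      Metric.isClosed_closedBall Metric.isOpen_ball.isClosed_compl
      (disjoint_left.2 fun y hy hy' => hy'.2 hy)
      (disjoint_left.2 fun y hy hy' => hy' hy.1))
  ext y
  simp only [Set.mem_sdiff, mem_inter_iff, mem_union, Metric.mem_sphere, Metric.mem_ball,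
    Metric.mem_closedBall]
  constructor
  · rintro ⟨hyT, hy⟩
    rcases lt_trichotomy (dist y w) r with h | h | h
    exacts [Or.inl ⟨h, hyT⟩, absurd ⟨h, hyT⟩ hy, Or.inr ⟨hyT, not_le.2 h⟩]
  · rintro (⟨h, hyT⟩ | ⟨hyT, h⟩)
    exacts [⟨hyT, fun h' => h.ne h'.1⟩, ⟨hyT, fun h' => h h'.1.le⟩]

lemma IsIrredCutSet.subset_closure_inter_closure (h : IsIrredCutSet T X) (hUV : T \ X = U ∪ V)
    (hU : U.Nonempty) (hV : V.Nonempty) (hsep : closure U ∩ V = ∅)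
    (hsep' : U ∩ closure V = ∅) : X ⊆ closure U ∩ closure V :=
  h.subset_closure_inter_closure_of_subset_union hUV hU hV hsep hsep'
    (by rw [← closure_union, ← hUV]; exact h.subset_closure_diff)

lemma IsIrredCutSet.isClosed (hT : IsClosed T) (h : IsIrredCutSet T X) : IsClosed X := by
  obtain ⟨hXT, U, V, hUV, hU, hV, hsep, hsep'⟩ := h.1
  have hX := h.subset_closure_inter_closure hUV hU hV hsep hsep'
  refine isClosed_of_closure_subset fun y hy => ?_
  have hyUV : y ∈ closure U ∩ closure V :=
    (isClosed_closure.inter isClosed_closure).closure_subset_iff.2 hX hy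
  by_contra hyX
  rcases (hUV ▸ ⟨hT.closure_subset_iff.2 hXT hy, hyX⟩ : y ∈ U ∪ V) with hyU | hyV
  · exact eq_empty_iff_forall_notMem.1 hsep' y ⟨hyU, hyUV.2⟩
  · exact eq_empty_iff_forall_notMem.1 hsep y ⟨hyUV.1, hyV⟩

end MetricCutSets

lemma exists_norm_pow_lt_of_spectralRadius_lt_one {𝔸 : Type*} [NormedRing 𝔸] [NormedAlgebra ℂ 𝔸]
    [CompleteSpace 𝔸] {a : 𝔸} (ha : spectralRadius ℂ a < 1) {ε : ℝ} (hε : 0 < ε) :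
    ∃ n, ‖a ^ n‖ < ε := by
  obtain ⟨m, hm, hm0⟩ := ((spectrum.pow_norm_pow_one_div_tendsto_nhds_spectralRadius a
    |>.eventually_lt_const ha).and (eventually_gt_atTop 0)).exists
  have hm1 : ‖a ^ m‖ < 1 := by
    rwa [ENNReal.ofReal_lt_one, Real.rpow_lt_one_iff' (norm_nonneg _) (by positivity)] at hm
  obtain ⟨k, hk⟩ := exists_pow_lt_of_lt_one hε hm1
  refine ⟨m * (k + 1), ?_⟩
  calc ‖a ^ (m * (k + 1))‖ ≤ ‖a ^ m‖ ^ (k + 1) := by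
        rw [pow_mul]; exact norm_pow_le' _ k.succ_pos
    _ ≤ ‖a ^ m‖ ^ k := pow_le_pow_of_le_one (norm_nonneg _) hm1.le k.le_succ
    _ < ε := hk

lemma norm_ofReal_comp {ι : Type*} [Fintype ι] (p : ι → ℝ) : ‖Complex.ofRealHom ∘ p‖ = ‖p‖ := by
  simp [Pi.norm_def, Function.comp_def]

section Expanding

attribute [local instance] Matrix.linftyOpNormedAddCommGroup Matrix.linftyOpNormedRing
  Matrix.linftyOpNormedAlgebra

variable {d : ℕ} {A : Matrix (Fin d) (Fin d) ℤ}

lemma Expanding.one_lt_norm_of_mem_spectrum (hA : Expanding A) {μ : ℂ}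
    (hμ : μ ∈ spectrum ℂ (A.map (Int.cast : ℤ → ℂ))) : 1 < ‖μ‖ :=
  hA μ (Module.End.hasEigenvalue_iff_mem_spectrum.2 (by rwa [Matrix.spectrum_toLin']))

lemma Expanding.isUnit_map (hA : Expanding A) : IsUnit (A.map (Int.cast : ℤ → ℂ)) := by
  by_contra h
  have := hA.one_lt_norm_of_mem_spectrum ((spectrum.zero_mem_iff ℂ).2 h)
  norm_num at this

lemma Expanding.spectralRadius_inv_lt_one [Nonempty (Fin d)] (hA : Expanding A) :
    spectralRadius ℂ (A.map (Int.cast : ℤ → ℂ))⁻¹ < 1 := by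
  set u := hA.isUnit_map.unit
  have hu : (A.map (Int.cast : ℤ → ℂ))⁻¹ = ↑u⁻¹ := by
    rw [Matrix.coe_units_inv, IsUnit.unit_spec]
  rw [hu]
  refine mod_cast spectrum.spectralRadius_lt_of_forall_lt (r := 1) _ fun μ hμ => ?_
  rw [← spectrum.map_inv, Set.mem_inv] at hμ
  have := hA.one_lt_norm_of_mem_spectrum hμ
  rw [norm_inv, one_lt_inv_iff₀] at this
  exact_mod_cast this.2

lemma Expanding.exists_pow_expands (hA : Expanding A) {ε : ℝ} (hε : 0 < ε) :
    ∃ n, ∀ p : Fin d → ℝ, ‖p‖ ≤ ε * ‖rmat A ^ n *ᵥ p‖ := by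
  rcases isEmpty_or_nonempty (Fin d) with hd | hd
  · exact ⟨0, fun p => by simp [Subsingleton.elim p 0]⟩
  set Ac := A.map (Int.cast : ℤ → ℂ)
  obtain ⟨n, hn⟩ := exists_norm_pow_lt_of_spectralRadius_lt_one hA.spectralRadius_inv_lt_one hε
  refine ⟨n, fun p => ?_⟩
  have hinv : Ac⁻¹ ^ n * Ac ^ n = 1 := by
    rw [Matrix.inv_pow', Matrix.nonsing_inv_mul _
      ((Matrix.isUnit_iff_isUnit_det _).1 (hA.isUnit_map.pow n))]
  have hmap : (rmat A ^ n).map Complex.ofRealHom = Ac ^ n := by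
    rw [← RingHom.mapMatrix_apply, map_pow]
    rfl
  have hvec : Complex.ofRealHom ∘ (rmat A ^ n *ᵥ p) = Ac ^ n *ᵥ (Complex.ofRealHom ∘ p) := by
    ext i
    rw [Function.comp_apply, RingHom.map_mulVec, hmap]
  calc ‖p‖ = ‖Ac⁻¹ ^ n *ᵥ (Ac ^ n *ᵥ (Complex.ofRealHom ∘ p))‖ := by
        rw [Matrix.mulVec_mulVec, hinv, Matrix.one_mulVec, norm_ofReal_comp]
    _ ≤ ‖Ac⁻¹ ^ n‖ * ‖rmat A ^ n *ᵥ p‖ := by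
        rw [← hvec, ← norm_ofReal_comp (rmat A ^ n *ᵥ p)]
        exact Matrix.linfty_opNorm_mulVec _ _
    _ ≤ ε * ‖rmat A ^ n *ᵥ p‖ := by gcongr

end Expanding

section SelfAffine

variable {d : ℕ} {A : Matrix (Fin d) (Fin d) ℤ} {D : Set (Fin d → ℤ)} {T : Set (Fin d → ℝ)}

lemma rvec_zero : rvec (0 : Fin d → ℤ) = 0 := by
  ext i; simp [rvec]

lemma rvec_add (v w : Fin d → ℤ) : rvec (v + w) = rvec v + rvec w := by
  ext i; simp [rvec]

lemma rvec_sub (v w : Fin d → ℤ) : rvec (v - w) = rvec v - rvec w := by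
  ext i; simp [rvec]

lemma rvec_mulVec_pow (A : Matrix (Fin d) (Fin d) ℤ) (n : ℕ) (v : Fin d → ℤ) :
    rvec (A ^ n *ᵥ v) = rmat A ^ n *ᵥ rvec v := by
  ext i
  rw [rmat, show A.map Int.cast = (Int.castRingHom ℝ).mapMatrix A from rfl, ← map_pow]
  exact (Int.castRingHom ℝ).map_mulVec (A ^ n) v i

lemma Vset_zero : Vset A D 0 = {0} := by
  ext v; simp [Vset]

lemma Vset_succ (n : ℕ) :
    Vset A D (n + 1) = {w | ∃ v ∈ Vset A D n, ∃ e ∈ D, w = v + A ^ n *ᵥ e} := by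
  ext w
  constructor
  · rintro ⟨dig, hdig, rfl⟩
    exact ⟨_, ⟨fun k => dig k.castSucc, fun k => hdig _, rfl⟩, dig (Fin.last n), hdig _,
      Fin.sum_univ_castSucc _⟩
  · rintro ⟨_, ⟨dig, hdig, rfl⟩, e, he, rfl⟩
    refine ⟨Fin.snoc dig e, Fin.lastCases (by simpa using he) fun k => by simpa using hdig k, ?_⟩
    simp [Fin.sum_univ_castSucc]

lemma mulVec_pow_image_eq_iUnion_trT
    (hself : (rmat A).mulVec '' T = ⋃ e ∈ D, (fun x => x + rvec e) '' T) (n : ℕ) :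
    (rmat A ^ n).mulVec '' T = ⋃ v ∈ Vset A D n, trT T v := by
  induction n with
  | zero => ext y; simp [Vset_zero, trT, rvec_zero]
  | succ n ih =>
    have hsplit : (rmat A ^ (n + 1)).mulVec '' T =
        (rmat A ^ n).mulVec '' ((rmat A).mulVec '' T) := by
      rw [image_image, pow_succ]
      simp_rw [Matrix.mulVec_mulVec]
    have hshift : ∀ e, (rmat A ^ n).mulVec '' ((fun x => x + rvec e) '' T) =
        ⋃ v ∈ Vset A D n, trT T (v + A ^ n *ᵥ e) := by
      intro e
      calc (rmat A ^ n).mulVec '' ((fun x => x + rvec e) '' T)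
          = (fun x => x + rvec (A ^ n *ᵥ e)) '' ((rmat A ^ n).mulVec '' T) := by
            simp_rw [image_image, Matrix.mulVec_add, rvec_mulVec_pow]
        _ = ⋃ v ∈ Vset A D n, trT T (v + A ^ n *ᵥ e) := by
            rw [ih, image_iUnion₂]
            simp_rw [trT, image_image, rvec_add, add_assoc]
    rw [hsplit, hself, image_iUnion₂]
    simp_rw [hshift]
    ext y
    simp only [mem_iUnion, Vset_succ, mem_ofPred_eq]
    constructor
    · rintro ⟨e, he, v, hv, hy⟩
      exact ⟨_, ⟨v, hv, e, he, rfl⟩, hy⟩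
    · rintro ⟨_, ⟨v, hv, e, he, rfl⟩, hy⟩
      exact ⟨e, he, v, hv, hy⟩

lemma inter_trT_sub_eq_singleton {v w : Fin d → ℤ} {p : Fin d → ℝ}
    (h : trT T v ∩ trT T w = {p}) : T ∩ trT T (w - v) = {p - rvec v} := by
  have hshift : (fun y => y - rvec v) '' (trT T v ∩ trT T w) = T ∩ trT T (w - v) := by
    rw [image_inter (sub_left_injective)]
    simp_rw [trT, image_image, add_sub_cancel_right, image_id', rvec_sub, add_sub_assoc]
  rw [← hshift, h, image_singleton]

end SelfAffine

section Lattice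

variable {d : ℕ}

lemma norm_rvec (v : Fin d → ℤ) : ‖rvec v‖ = ‖v‖ := rfl

lemma finite_setOf_norm_rvec_le (c : ℝ) : {v : Fin d → ℤ | ‖rvec v‖ ≤ c}.Finite := by
  simp_rw [norm_rvec, ← mem_closedBall_zero_iff, ofPred_mem_eq]
  exact (isCompact_closedBall 0 c).finite_of_discrete

lemma locallyFinite_trT {T : Set (Fin d → ℝ)} (hT : Bornology.IsBounded T) :
    LocallyFinite (trT T) := by
  intro x
  obtain ⟨R, hR⟩ := hT.subset_closedBall 0
  refine ⟨Metric.ball x 1, Metric.ball_mem_nhds x one_pos,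
    (finite_setOf_norm_rvec_le (‖x‖ + 1 + R)).subset ?_⟩
  rintro v ⟨_, ⟨t, ht, rfl⟩, hy⟩
  have ht' : ‖t‖ ≤ R := by simpa using norm_le_of_mem_closedBall (hR ht)
  have hy' : ‖t + rvec v‖ ≤ ‖x‖ + 1 := norm_le_of_mem_closedBall (Metric.ball_subset_closedBall hy)
  calc ‖rvec v‖ = ‖(t + rvec v) - t‖ := by rw [add_sub_cancel_left]
    _ ≤ ‖t + rvec v‖ + ‖t‖ := norm_sub_le _ _
    _ ≤ ‖x‖ + 1 + R := add_le_add hy' ht'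

end Lattice

section Tiles

variable {d : ℕ} {A : Matrix (Fin d) (Fin d) ℤ} {D : Set (Fin d → ℤ)} {T : Set (Fin d → ℝ)}

lemma Expanding.exists_homeomorph_pow_dist_lt (hA : Expanding A) (hT : Bornology.IsBounded T)
    {ε : ℝ} (hε : 0 < ε) :
    ∃ n, ∃ φ : (Fin d → ℝ) ≃ₜ (Fin d → ℝ), ⇑φ = (rmat A ^ n).mulVec ∧
      ∀ v, ∀ y ∈ φ ⁻¹' trT T v, ∀ z ∈ φ ⁻¹' trT T v, dist y z < ε := by
  set c := ε / (Metric.diam T + 1)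
  obtain ⟨n, hn⟩ := hA.exists_pow_expands (ε := c) (by positivity)
  have hinj : Function.Injective (rmat A ^ n).mulVec := fun p q hpq => by
    have := hn (p - q)
    rw [Matrix.mulVec_sub, hpq, sub_self, norm_zero, mul_zero, norm_le_zero_iff] at this
    exact sub_eq_zero.1 this
  set φ := (LinearEquiv.ofInjectiveEndo (Matrix.toLin' (rmat A ^ n)) hinj
    ).toContinuousLinearEquiv.toHomeomorph
  have hφ : ∀ y, φ y = rmat A ^ n *ᵥ y := fun _ => rfl
  refine ⟨n, φ, rfl, ?_⟩
  rintro v y ⟨t, ht, hty⟩ z ⟨s, hs, hsz⟩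
  calc dist y z ≤ c * ‖φ y - φ z‖ := by
        rw [dist_eq_norm, hφ, hφ, ← Matrix.mulVec_sub]
        exact hn _
    _ = c * dist t s := by
        rw [← hty, ← hsz, dist_eq_norm, add_sub_add_right_eq_sub]
    _ ≤ c * Metric.diam T := by
        gcongr
        exact Metric.dist_le_diam_of_mem hT ht hs
    _ < ε := by
        rw [div_mul_eq_mul_div, div_lt_iff₀ (by positivity)]
        nlinarith [Metric.diam_nonneg (s := T)]

lemma exists_trT_inter_eq_singleton (hA : Expanding A) (hT : IsCompact T)
    (hself : (rmat A).mulVec '' T = ⋃ e ∈ D, (fun x => x + rvec e) '' T)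
    (hcut : ¬ HasCutPoint T) {U V : Set (Fin d → ℝ)} (hUVT : U ∪ V ⊆ T)
    (hsep : closure U ∩ V = ∅) (hsep' : U ∩ closure V = ∅) {x : Fin d → ℝ}
    (hxU : x ∈ closure U) (hxV : x ∈ closure V)
    (hnear : ∀ᶠ y in 𝓝 x, y ∈ T → y ∈ {x} ∪ (U ∪ V)) :
    ∃ v w p, trT T v ∩ trT T w = {p} := by
  obtain ⟨ε, hε, hball⟩ := Metric.eventually_nhds_iff_ball.1 hnear
  obtain ⟨n, φ, hφ, hsmall⟩ := hA.exists_homeomorph_pow_dist_lt hT.isBounded hε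
  -- the pieces `A⁻ⁿ(T + v)`, `v ∈ Vₙ`, of the `n`-th subdivision of `T`
  set K : Vset A D n → Set (Fin d → ℝ) := fun v => φ ⁻¹' trT T v
  have hφT : φ '' T = ⋃ v ∈ Vset A D n, trT T v := hφ ▸ mulVec_pow_image_eq_iUnion_trT hself n
  have hKT : ∀ v, K v ⊆ T := fun v y hy =>
    φ.injective.mem_set_image.1 (hφT ▸ mem_biUnion v.2 hy)
  have hTK : T ⊆ ⋃ v, K v := fun y hy => by
    obtain ⟨v, hv, hyv⟩ := mem_iUnion₂.1 (hφT ▸ mem_image_of_mem φ hy)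
    exact mem_iUnion.2 ⟨⟨v, hv⟩, hyv⟩
  have hKcut : ∀ v, ¬ HasCutPoint (K v) := fun v => by
    rw [show K v = ((Homeomorph.addRight (rvec v)).trans φ.symm) '' T by
      change _ = (φ.symm ∘ Homeomorph.addRight (rvec v)) '' T
      rw [image_comp, Homeomorph.image_symm]; rfl,
      Homeomorph.hasCutPoint_image_iff]
    exact hcut
  obtain ⟨v, w, hvw⟩ := exists_inter_eq_singleton_of_locallyFinite
    (((locallyFinite_trT hT.isBounded).preimage_continuous φ.continuous).comp_injective
      Subtype.val_injective)
    (fun v => (hT.image (continuous_add_const _)).isClosed.preimage φ.continuous) hKcut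
    (fun v hxv y hy => hball y (hsmall v y hy x hxv) (hKT v hy)) (hUVT.trans hTK)
    hsep hsep' hxU hxV
  refine ⟨v, w, φ x, ?_⟩
  rw [← φ.image_preimage (trT T v ∩ trT T w), preimage_inter]
  exact (congrArg (φ '' ·) hvw).trans image_singleton

end Tiles

theorem statement3_general {d : ℕ} (A : Matrix (Fin d) (Fin d) ℤ) (D : Set (Fin d → ℤ))
    (T : Set (Fin d → ℝ)) (htile : IsZdTile A D T)
    (hnosing : ∀ s : Fin d → ℤ, ¬ ∃ p, T ∩ trT T s = {p}) :
    (∃ z ∈ T, SepUnion (T \ {z})) ∨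
      ∀ X : Set (Fin d → ℝ), IsIrredCutSet T X → Perfect X := by
  obtain ⟨hA, -, ⟨-, hT, hself⟩, -⟩ := htile
  refine or_iff_not_imp_left.2 fun hcut X hX => ⟨hX.isClosed hT.isClosed, fun x hx => ?_⟩
  obtain ⟨-, U, V, hUV, hU, hV, hsep, hsep'⟩ := hX.1
  have hxUV := hX.subset_closure_inter_closure hUV hU hV hsep hsep' hx
  by_contra hacc
  rw [accPt_iff_frequently, not_frequently] at hacc
  have hnear : ∀ᶠ y in 𝓝 x, y ∈ T → y ∈ {x} ∪ (U ∪ V) := by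
    filter_upwards [hacc] with y hy hyT
    by_cases hyX : y ∈ X
    · exact Or.inl (not_not.1 fun hyx => hy ⟨hyx, hyX⟩)
    · exact Or.inr (hUV ▸ ⟨hyT, hyX⟩)
  obtain ⟨v, w, p, h⟩ := exists_trT_inter_eq_singleton hA hT hself hcut
    (hUV ▸ sdiff_subset) hsep hsep' hxUV.1 hxUV.2 hnear
  exact hnosing (w - v) ⟨_, inter_trT_sub_eq_singleton h⟩

theorem statement3 {d : ℕ} (A : Matrix (Fin d) (Fin d) ℤ) (D : Set (Fin d → ℤ))
    (T : Set (Fin d → ℝ)) (htile : IsZdTile A D T) (hconn : IsConnected T)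
    (hnosing : ∀ s : Fin d → ℤ, ¬ ∃ p, T ∩ trT T s = {p}) :
    (∃ z ∈ T, SepUnion (T \ {z})) ∨
      ∀ X : Set (Fin d → ℝ), IsIrredCutSet T X → Perfect X :=
  statement3_general A D T htile hnosing
end
end

section
/- Let n ≥ 4 be even, Q_n(i,j) := [i/n,(i+1)/n] × [j/n,(j+1)/n] for i,j ∈ {0,…,n−1}, and T_n := ⋃_{i,j ∈ {0,…,n−1}, i+j ≡ 0 (mod 2)} Q_n(i,j) ⊆ ℝ². Then T_n is connected, and the set X := {(k/n, (k+1)/n) : k = 1, …, n−2} is an irreducible cut set of T_n of cardinality #X = n − 2. -/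
open Set Filter Topology

/-- The square `Q_n(i,j) = [i/n,(i+1)/n] × [j/n,(j+1)/n]`. -/
def Qsq (n i j : ℕ) : Set (ℝ × ℝ) :=
  Set.Icc ((i : ℝ) / n) (((i : ℝ) + 1) / n) ×ˢ Set.Icc ((j : ℝ) / n) (((j : ℝ) + 1) / n)

/-- The checkerboard set `T_n`. -/
def Tcheck (n : ℕ) : Set (ℝ × ℝ) :=
  ⋃ p ∈ {p : ℕ × ℕ | p.1 < n ∧ p.2 < n ∧ (p.1 + p.2) % 2 = 0}, Qsq n p.1 p.2

/-!
The squares `Q(i,j)` with `j ≤ i` form a lower half `L` of `T_n`, those with `j ≥ i + 2` an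
upper half `U`; parity rules out `j = i + 1`, so `T_n = L ∪ U`. Each half is connected through
shared corners, and `L ∩ U = X` consists of the corners `(k/n, (k+1)/n)` where `Q(k,k)` meets
`Q(k-1,k+1)`. Removing `X` therefore separates the two closed halves, while removing a proper
subset of `X` leaves a common point through which the two connected halves remain joined.
-/

open Relation

section General

variable {α : Type*} [TopologicalSpace α]

theorem not_sepUnion_of_isPreconnected {S : Set α} (hS : IsPreconnected S) : ¬ SepUnion S := by
  rintro ⟨U, V, rfl, ⟨u, hu⟩, ⟨v, hv⟩, hUV, hVU⟩
  have hU : ∀ x ∈ U, x ∉ closure V := fun x hx hx' => (hVU ▸ mem_inter hx hx' : x ∈ (∅ : Set α))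
  have hV : ∀ x ∈ V, x ∉ closure U := fun x hx hx' => (hUV ▸ mem_inter hx' hx : x ∈ (∅ : Set α))
  obtain ⟨z, hz, hzV, hzU⟩ := hS (closure V)ᶜ (closure U)ᶜ isClosed_closure.isOpen_compl
    isClosed_closure.isOpen_compl
    (fun x hx => hx.elim (fun hx => Or.inl (hU x hx)) (fun hx => Or.inr (hV x hx)))
    ⟨u, Or.inl hu, hU u hu⟩ ⟨v, Or.inr hv, hV v hv⟩
  exact hz.elim (fun hz => hzU (subset_closure hz)) (fun hz => hzV (subset_closure hz))

theorem sepUnion_union_diff {A B X : Set α} (hA : IsClosed A) (hB : IsClosed B)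
    (hAB : A ∩ B ⊆ X) (hAX : (A \ X).Nonempty) (hBX : (B \ X).Nonempty) :
    SepUnion ((A ∪ B) \ X) := by
  refine ⟨A \ X, B \ X, union_sdiff_distrib, hAX, hBX, ?_, ?_⟩
  · refine eq_empty_of_forall_notMem fun z ⟨hzA, hzB, hzX⟩ => hzX (hAB ⟨?_, hzB⟩)
    exact closure_minimal sdiff_subset hA hzA
  · refine eq_empty_of_forall_notMem fun z ⟨⟨hzA, hzX⟩, hzB⟩ => hzX (hAB ⟨hzA, ?_⟩)
    exact closure_minimal sdiff_subset hB hzB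

theorem IsPreconnected.biUnion_of_exists_lt {ι : Type*} {t : Set ι} {s : ι → Set α}
    (f : ι → ℕ) (r : ι) (hs : ∀ i ∈ t, IsPreconnected (s i))
    (hstep : ∀ i ∈ t, i ≠ r → ∃ j ∈ t, f j < f i ∧ (s i ∩ s j).Nonempty) :
    IsPreconnected (⋃ i ∈ t, s i) := by
  let R : ι → ι → Prop := fun i j => (s i ∩ s j).Nonempty ∧ i ∈ t ∧ j ∈ t
  have : Std.Symm R := ⟨fun i j ⟨h, hi, hj⟩ => ⟨inter_comm (s i) (s j) ▸ h, hj, hi⟩⟩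
  have hroot : ∀ i ∈ t, ReflTransGen R i r := by
    intro i hi
    induction hfi : f i using Nat.strong_induction_on generalizing i with
    | _ m ih =>
      by_cases hir : i = r
      · exact hir ▸ ReflTransGen.refl
      obtain ⟨j, hj, hlt, hij⟩ := hstep i hi hir
      exact ReflTransGen.head ⟨hij, hi, hj⟩ (ih (f j) (hfi ▸ hlt) j hj rfl)
  refine IsPreconnected.biUnion_of_reflTransGen hs fun i hi j hj => ?_
  refine ReflTransGen.mono ?_ _ _ ((hroot i hi).trans (Std.Symm.symm _ _ (hroot j hj)))
  exact fun a b h => ⟨h.1, h.2.1⟩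

end General

namespace Checkerboard

variable {n : ℕ}

def squareIdx (n : ℕ) : Set (ℕ × ℕ) := {p | p.1 < n ∧ p.2 < n ∧ (p.1 + p.2) % 2 = 0}

def lowerIdx (n : ℕ) : Set (ℕ × ℕ) := {p ∈ squareIdx n | p.2 ≤ p.1}

def upperIdx (n : ℕ) : Set (ℕ × ℕ) := {p ∈ squareIdx n | p.1 + 2 ≤ p.2}

def lowerHalf (n : ℕ) : Set (ℝ × ℝ) := ⋃ p ∈ lowerIdx n, Qsq n p.1 p.2

def upperHalf (n : ℕ) : Set (ℝ × ℝ) := ⋃ p ∈ upperIdx n, Qsq n p.1 p.2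

noncomputable def gridPt (n a b : ℕ) : ℝ × ℝ := ((a : ℝ) / n, (b : ℝ) / n)

noncomputable def cutPt (n k : ℕ) : ℝ × ℝ := ((k : ℝ) / n, ((k : ℝ) + 1) / n)

def cutSet (n : ℕ) : Set (ℝ × ℝ) := cutPt n '' {k | 1 ≤ k ∧ k ≤ n - 2}

lemma mem_Qsq_iff (hn : 0 < n) {z : ℝ × ℝ} {i j : ℕ} :
    z ∈ Qsq n i j ↔ (i ≤ z.1 * n ∧ z.1 * n ≤ i + 1) ∧ (j ≤ z.2 * n ∧ z.2 * n ≤ j + 1) := by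
  have hn' : (0 : ℝ) < n := by exact_mod_cast hn
  simp only [Qsq, mem_prod, mem_Icc, div_le_iff₀ hn', le_div_iff₀ hn']

lemma gridPt_mem_Qsq (hn : 0 < n) {a b i j : ℕ} (hia : i ≤ a) (hai : a ≤ i + 1)
    (hjb : j ≤ b) (hbj : b ≤ j + 1) : gridPt n a b ∈ Qsq n i j := by
  have hn' : (n : ℝ) ≠ 0 := by exact_mod_cast hn.ne'
  simp only [mem_Qsq_iff hn, gridPt, div_mul_cancel₀ _ hn']
  exact ⟨⟨by exact_mod_cast hia, by exact_mod_cast hai⟩, by exact_mod_cast hjb,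
    by exact_mod_cast hbj⟩

lemma cutPt_eq_gridPt (k : ℕ) : cutPt n k = gridPt n k (k + 1) := by
  simp [cutPt, gridPt]

lemma gridPt_notMem_cutSet (hn : 0 < n) {a b : ℕ} (hab : b ≠ a + 1) :
    gridPt n a b ∉ cutSet n := by
  have hn' : (n : ℝ) ≠ 0 := by exact_mod_cast hn.ne'
  rintro ⟨k, -, hk⟩
  simp only [cutPt, gridPt, Prod.mk.injEq, div_left_inj' hn'] at hk
  have hka : k = a := by exact_mod_cast hk.1
  have hkb : k + 1 = b := by exact_mod_cast hk.2
  omega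

lemma exists_fst_mul_eq_of_mem_cutSet (hn : 0 < n) {z : ℝ × ℝ} (hz : z ∈ cutSet n) :
    ∃ k : ℕ, z.1 * n = k := by
  have hn' : (n : ℝ) ≠ 0 := by exact_mod_cast hn.ne'
  obtain ⟨k, -, rfl⟩ := hz
  exact ⟨k, div_mul_cancel₀ _ hn'⟩

lemma cutPt_injective (hn : 0 < n) : Function.Injective (cutPt n) := fun k l hkl => by
  have hn' : (n : ℝ) ≠ 0 := by exact_mod_cast hn.ne'
  simp only [cutPt, Prod.mk.injEq, div_left_inj' hn'] at hkl
  exact_mod_cast hkl.1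

lemma isPreconnected_Qsq_diff (hn : 0 < n) (i j : ℕ) {F : Set (ℝ × ℝ)}
    (hF : ∀ z ∈ F, ∃ k : ℕ, z.1 * n = k) : IsPreconnected (Qsq n i j \ F) := by
  have hn' : (0 : ℝ) < n := by exact_mod_cast hn
  have hlt : ∀ m : ℕ, (m : ℝ) / n < ((m : ℝ) + 1) / n := fun m => by gcongr; linarith
  let O := Ioo ((i : ℝ) / n) (((i : ℝ) + 1) / n) ×ˢ Ioo ((j : ℝ) / n) (((j : ℝ) + 1) / n)
  have hO : closure O = Qsq n i j := by
    simp only [O, closure_prod_eq, closure_Ioo (hlt i).ne, closure_Ioo (hlt j).ne, Qsq]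
  refine ((convex_Ioo _ _).prod (convex_Ioo _ _)).isPreconnected.subset_closure ?_
    (by rw [hO]; exact sdiff_subset)
  refine fun z hz => ⟨hO ▸ subset_closure hz, fun hzF => ?_⟩
  obtain ⟨k, hk⟩ := hF z hzF
  obtain ⟨⟨h1, h2⟩, -⟩ := hz
  rw [div_lt_iff₀ hn', hk] at h1
  rw [lt_div_iff₀ hn', hk] at h2
  have : i < k := by exact_mod_cast h1
  have : k < i + 1 := by exact_mod_cast h2
  omega

lemma inter_diff_nonempty_of_gridPt_mem (hn : 0 < n) {F : Set (ℝ × ℝ)} (hF : F ⊆ cutSet n)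
    {a b i j i' j' : ℕ} (hab : b ≠ a + 1) (h : gridPt n a b ∈ Qsq n i j)
    (h' : gridPt n a b ∈ Qsq n i' j') : ((Qsq n i j \ F) ∩ (Qsq n i' j' \ F)).Nonempty :=
  have hF : gridPt n a b ∉ F := fun hm => gridPt_notMem_cutSet hn hab (hF hm)
  ⟨gridPt n a b, ⟨h, hF⟩, h', hF⟩

lemma isPreconnected_lowerHalf_diff (hn : 0 < n) {F : Set (ℝ × ℝ)} (hF : F ⊆ cutSet n) :
    IsPreconnected (lowerHalf n \ F) := by
  rw [lowerHalf]
  simp only [Set.iUnion_sdiff]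
  refine .biUnion_of_exists_lt Prod.fst (0, 0)
    (fun p _ => isPreconnected_Qsq_diff hn _ _ fun _ hz =>
      exists_fst_mul_eq_of_mem_cutSet hn (hF hz)) ?_
  rintro ⟨i, j⟩ ⟨⟨hi, hj, hpar⟩, hji⟩ hne
  dsimp only at hi hj hpar hji
  rcases Nat.eq_zero_or_pos j with rfl | hj0
  · have : i ≠ 0 := by rintro rfl; exact hne rfl
    refine ⟨(i - 1, 1), ⟨⟨by omega, by omega, by omega⟩, by omega⟩, by dsimp only; omega, ?_⟩
    exact inter_diff_nonempty_of_gridPt_mem hn hF (a := i) (b := 1) (by omega)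
      (gridPt_mem_Qsq hn (by omega) (by omega) (by omega) (by omega))
      (gridPt_mem_Qsq hn (by omega) (by omega) (by omega) (by omega))
  · refine ⟨(i - 1, j - 1), ⟨⟨by omega, by omega, by omega⟩, by omega⟩, by dsimp only; omega, ?_⟩
    exact inter_diff_nonempty_of_gridPt_mem hn hF (a := i) (b := j) (by omega)
      (gridPt_mem_Qsq hn (by omega) (by omega) (by omega) (by omega))
      (gridPt_mem_Qsq hn (by omega) (by omega) (by omega) (by omega))

lemma isPreconnected_upperHalf_diff (hn : 0 < n) {F : Set (ℝ × ℝ)} (hF : F ⊆ cutSet n) :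
    IsPreconnected (upperHalf n \ F) := by
  rw [upperHalf]
  simp only [Set.iUnion_sdiff]
  refine .biUnion_of_exists_lt Prod.snd (0, 2)
    (fun p _ => isPreconnected_Qsq_diff hn _ _ fun _ hz =>
      exists_fst_mul_eq_of_mem_cutSet hn (hF hz)) ?_
  rintro ⟨i, j⟩ ⟨⟨hi, hj, hpar⟩, hij⟩ hne
  dsimp only at hi hj hpar hij
  rcases Nat.eq_zero_or_pos i with rfl | hi0
  · have : j ≠ 2 := by rintro rfl; exact hne rfl
    refine ⟨(1, j - 1), ⟨⟨by omega, by omega, by omega⟩, by omega⟩, by dsimp only; omega, ?_⟩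
    exact inter_diff_nonempty_of_gridPt_mem hn hF (a := 1) (b := j) (by omega)
      (gridPt_mem_Qsq hn (by omega) (by omega) (by omega) (by omega))
      (gridPt_mem_Qsq hn (by omega) (by omega) (by omega) (by omega))
  · refine ⟨(i - 1, j - 1), ⟨⟨by omega, by omega, by omega⟩, by omega⟩, by dsimp only; omega, ?_⟩
    exact inter_diff_nonempty_of_gridPt_mem hn hF (a := i) (b := j) (by omega)
      (gridPt_mem_Qsq hn (by omega) (by omega) (by omega) (by omega))
      (gridPt_mem_Qsq hn (by omega) (by omega) (by omega) (by omega))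

lemma Tcheck_eq_lowerHalf_union_upperHalf : Tcheck n = lowerHalf n ∪ upperHalf n := by
  have hidx : squareIdx n = lowerIdx n ∪ upperIdx n := by
    ext ⟨i, j⟩
    simp only [squareIdx, lowerIdx, upperIdx, mem_union, mem_ofPred_eq]
    omega
  rw [lowerHalf, upperHalf, ← biUnion_union, ← hidx]
  rfl

lemma isClosed_biUnion_Qsq {s : Set (ℕ × ℕ)} (hs : s ⊆ squareIdx n) :
    IsClosed (⋃ p ∈ s, Qsq n p.1 p.2) := by
  refine Finite.isClosed_biUnion ?_ fun p _ => isClosed_Icc.prod isClosed_Icc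
  exact ((finite_Iio n).prod (finite_Iio n)).subset fun p hp => ⟨(hs hp).1, (hs hp).2.1⟩

lemma lowerHalf_inter_upperHalf_subset (hn : 0 < n) : lowerHalf n ∩ upperHalf n ⊆ cutSet n := by
  rintro z ⟨hzL, hzU⟩
  simp only [lowerHalf, upperHalf, mem_iUnion₂] at hzL hzU
  obtain ⟨⟨i, j⟩, ⟨⟨hi, -, -⟩, hji⟩, hz⟩ := hzL
  obtain ⟨⟨i', j'⟩, ⟨⟨-, hj', -⟩, hij'⟩, hz'⟩ := hzU
  rw [mem_Qsq_iff hn] at hz hz'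
  dsimp only at hz hz' hji hij' hi hj'
  have hji : (j : ℝ) ≤ i := by exact_mod_cast hji
  have hij' : (i' : ℝ) + 2 ≤ j' := by exact_mod_cast hij'
  -- `z.2 n ≤ j + 1 ≤ i + 1 ≤ z.1 n + 1 ≤ i' + 2 ≤ j' ≤ z.2 n` forces equality throughout.
  have hx : z.1 * n = i := by linarith
  have hy : z.2 * n = i + 1 := by linarith
  have hii' : i = i' + 1 := by exact_mod_cast (by linarith : (i : ℝ) = i' + 1)
  have hj'i : j' = i + 1 := by exact_mod_cast (by linarith : (j' : ℝ) = i + 1)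
  have hn' : (n : ℝ) ≠ 0 := by exact_mod_cast hn.ne'
  refine ⟨i, ⟨by omega, by omega⟩, Prod.ext ?_ ?_⟩
  · exact (eq_div_iff hn').2 hx |>.symm
  · exact (eq_div_iff hn').2 hy |>.symm

lemma cutSet_subset_lowerHalf_inter_upperHalf (hn : 0 < n) :
    cutSet n ⊆ lowerHalf n ∩ upperHalf n := by
  rintro _ ⟨k, ⟨hk1, hk2⟩, rfl⟩
  rw [cutPt_eq_gridPt]
  refine ⟨mem_biUnion (x := (k, k)) ⟨⟨by omega, by omega, by omega⟩, le_rfl⟩ ?_,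
    mem_biUnion (x := (k - 1, k + 1)) ⟨⟨by omega, by omega, by omega⟩, by omega⟩ ?_⟩ <;>
  exact gridPt_mem_Qsq hn (by omega) (by omega) (by omega) (by omega)

lemma isPreconnected_Tcheck_diff (hn : 0 < n) {F : Set (ℝ × ℝ)} (hF : F ⊂ cutSet n) :
    IsPreconnected (Tcheck n \ F) := by
  obtain ⟨x, hx, hxF⟩ := exists_of_ssubset hF
  obtain ⟨hxL, hxU⟩ := cutSet_subset_lowerHalf_inter_upperHalf hn hx
  rw [Tcheck_eq_lowerHalf_union_upperHalf, union_sdiff_distrib]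
  exact IsPreconnected.union x ⟨hxL, hxF⟩ ⟨hxU, hxF⟩ (isPreconnected_lowerHalf_diff hn hF.subset)
    (isPreconnected_upperHalf_diff hn hF.subset)

lemma sepUnion_Tcheck_diff_cutSet (hn : 2 < n) : SepUnion (Tcheck n \ cutSet n) := by
  have hn0 : 0 < n := by omega
  rw [Tcheck_eq_lowerHalf_union_upperHalf]
  refine sepUnion_union_diff (isClosed_biUnion_Qsq (sep_subset _ _))
    (isClosed_biUnion_Qsq (sep_subset _ _)) (lowerHalf_inter_upperHalf_subset hn0) ⟨gridPt n 0 0, ?_, gridPt_notMem_cutSet hn0 (by omega)⟩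
    ⟨gridPt n 0 2, ?_, gridPt_notMem_cutSet hn0 (by omega)⟩
  · exact mem_biUnion (x := (0, 0)) ⟨⟨hn0, hn0, rfl⟩, le_rfl⟩
      (gridPt_mem_Qsq hn0 le_rfl (by omega) le_rfl (by omega))
  · exact mem_biUnion (x := (0, 2)) ⟨⟨hn0, hn, rfl⟩, le_rfl⟩
      (gridPt_mem_Qsq hn0 le_rfl (by omega) le_rfl (by omega))

lemma cutSet_subset_Tcheck (hn : 0 < n) : cutSet n ⊆ Tcheck n :=
  Tcheck_eq_lowerHalf_union_upperHalf ▸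
    (cutSet_subset_lowerHalf_inter_upperHalf hn).trans (inter_subset_left.trans subset_union_left)

lemma cutSet_nonempty (hn : 3 ≤ n) : (cutSet n).Nonempty :=
  ⟨cutPt n 1, 1, ⟨le_rfl, by omega⟩, rfl⟩

lemma ncard_cutSet (hn : 0 < n) : (cutSet n).ncard = n - 2 := by
  rw [cutSet, ncard_image_of_injective _ (cutPt_injective hn)]
  exact (Set.ncard_Icc_nat 1 (n - 2)).trans (by omega)

end Checkerboard

open Checkerboard in
theorem statement7_general (n : ℕ) (hn : 4 ≤ n) :
    IsConnected (Tcheck n) ∧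
      IsIrredCutSet (Tcheck n)
        ((fun k : ℕ => (((k : ℝ) / n, ((k : ℝ) + 1) / n) : ℝ × ℝ)) ''
          {k : ℕ | 1 ≤ k ∧ k ≤ n - 2}) ∧
      ((fun k : ℕ => (((k : ℝ) / n, ((k : ℝ) + 1) / n) : ℝ × ℝ)) ''
          {k : ℕ | 1 ≤ k ∧ k ≤ n - 2}).ncard = n - 2 := by
  have hn0 : 0 < n := by omega
  refine ⟨⟨(cutSet_nonempty (by omega)).mono (cutSet_subset_Tcheck hn0), ?_⟩,
    ⟨⟨cutSet_subset_Tcheck hn0, sepUnion_Tcheck_diff_cutSet (by omega)⟩,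
      fun X₀ hX₀ _ => not_sepUnion_of_isPreconnected (isPreconnected_Tcheck_diff hn0 hX₀)⟩,
    ncard_cutSet hn0⟩
  simpa using isPreconnected_Tcheck_diff hn0 (empty_ssubset.2 (cutSet_nonempty (by omega)))

theorem statement7 (n : ℕ) (hn : 4 ≤ n) (heven : Even n) :
    IsConnected (Tcheck n) ∧
      IsIrredCutSet (Tcheck n)
        ((fun k : ℕ => (((k : ℝ) / n, ((k : ℝ) + 1) / n) : ℝ × ℝ)) ''
          {k : ℕ | 1 ≤ k ∧ k ≤ n - 2}) ∧
      ((fun k : ℕ => (((k : ℝ) / n, ((k : ℝ) + 1) / n) : ℝ × ℝ)) ''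
          {k : ℕ | 1 ≤ k ∧ k ≤ n - 2}).ncard = n - 2 :=
  statement7_general n hn
end
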